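/- arXiv:1605.07655 — 3 statements merged into one kernel-verified Lean document; each statement's English description precedes it below -/
import Mathlib

section
/- Let V be an n-dimensional subspace of R^(n+d) and π_V the orthogonal projection onto V. There exists δ₀ = δ₀(n,d) > 0 (e.g., δ₀ = 1/(8(n+d-1))) such that for any δ ≤ δ₀ and any linear operator L on R^(n+d) with ‖π_V − L‖ ≤ δ (operator norm), L has exactly n eigenvalues λ₁,…,λₙ (counted with multiplicity) satisfying |λⱼ| ≥ 1 − (n+d)δ ≥ 3/4, and exactly d eigenvalues λ_{n+1},…,λ_{n+d} satisfying |λⱼ| ≤ (n+d)δ ≤ 1/4. -/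
open scoped Classical

open Polynomial Matrix
open scoped RealInnerProductSpace

lemma hasEigenvalue_of_root' {N : ℕ} (A : Matrix (Fin N) (Fin N) ℂ) {μ : ℂ}
    (h : μ ∈ A.charpoly.roots) : Module.End.HasEigenvalue (Matrix.toLin' A) μ := by
  have hroot : A.charpoly.IsRoot μ := (Polynomial.mem_roots (A.charpoly_monic.ne_zero)).1 h
  have hdet : (Matrix.scalar (Fin N) μ - A).det = 0 := by
    have : A.charpoly.eval μ = (Matrix.scalar (Fin N) μ - A).det := by
      rw [Matrix.charpoly, ← Polynomial.coe_evalRingHom, RingHom.map_det]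
      congr 1
      ext i j
      by_cases hij : i = j <;>
        simp [charmatrix_apply, hij, Matrix.diagonal_apply, Matrix.scalar_apply]
    rw [← this]; exact hroot
  have hspec : μ ∈ spectrum ℂ A := by
    rw [spectrum.mem_iff]
    intro hu
    rw [Matrix.isUnit_iff_isUnit_det] at hu
    rw [show (algebraMap ℂ (Matrix (Fin N) (Fin N) ℂ)) μ - A = Matrix.scalar (Fin N) μ - A by
      congr 1] at hu
    rw [hdet] at hu
    exact hu.ne_zero rfl
  rw [Module.End.hasEigenvalue_iff_mem_spectrum]
  rwa [show Matrix.toLin' A = Matrix.toLinAlgEquiv' A from rfl,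
    AlgEquiv.spectrum_eq Matrix.toLinAlgEquiv' A]

lemma count_key' {N nn : ℕ} {r : ℝ} (A : Matrix (Fin N) (Fin N) ℂ)
    (hr : 0 ≤ r) (hr4 : r ≤ 1/4)
    (hroots : ∀ μ ∈ A.charpoly.roots, ‖μ‖ ≤ r ∨ ‖μ - 1‖ ≤ r)
    (htrace : ‖A.trace - (nn : ℂ)‖ ≤ r)
    (hcount : (N : ℝ) * r + r < 1) :
    Multiset.card (A.charpoly.roots.filter (fun z => 1 - r ≤ ‖z‖)) = nn ∧
    Multiset.card (A.charpoly.roots.filter (fun z => ‖z‖ ≤ r)) + nn = N := by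
  classical
  set R := A.charpoly.roots with hR
  have hsplit : ∀ μ ∈ R, (1 - r ≤ ‖μ‖ ↔ ‖μ - 1‖ ≤ r) := by
    intro μ hμ
    constructor
    · intro hb
      rcases hroots μ hμ with h | h
      · linarith
      · exact h
    · intro h
      have := norm_sub_norm_le (1 : ℂ) μ
      rw [norm_sub_rev] at this
      simp only [norm_one] at this
      linarith
  have hsmall : ∀ μ ∈ R, (‖μ‖ ≤ r ↔ ¬(1 - r ≤ ‖μ‖)) := by
    intro μ hμ
    constructor
    · intro h hb; linarith
    · intro hb
      rcases hroots μ hμ with h | h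
      · exact h
      · exact absurd ((hsplit μ hμ).2 h) (by exact hb)
  set B := R.filter (fun z => 1 - r ≤ ‖z‖) with hB
  set S := R.filter (fun z => ‖z‖ ≤ r) with hS
  have hSeq : S = R.filter (fun z => ¬(1 - r ≤ ‖z‖)) :=
    Multiset.filter_congr hsmall
  have hRBS : B + S = R := by
    rw [hSeq]; exact Multiset.filter_add_not _ _
  have hcardR : Multiset.card R = N := by
    have h1 : A.charpoly.natDegree = N := by
      simpa using A.charpoly_natDegree_eq_dim
    have h2 := (Polynomial.splits_iff_card_roots).1
      (IsAlgClosed.splits A.charpoly)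
    rw [h1] at h2
    exact h2
  have hsum : R.sum = A.trace := (Matrix.trace_eq_sum_roots_charpoly A).symm
  have hBsum : ‖B.sum - (Multiset.card B : ℂ)‖ ≤ (Multiset.card B : ℝ) * r := by
    have e1 : B.sum - (Multiset.card B : ℂ) = (B.map (fun z => z - 1)).sum := by
      rw [Multiset.sum_map_sub]
      simp [Multiset.sum_replicate, nsmul_eq_mul]
    rw [e1]
    calc ‖(B.map (fun z => z - 1)).sum‖ ≤ ((B.map (fun z => z - 1)).map norm).sum :=
          norm_multiset_sum_le _
      _ ≤ (Multiset.card ((B.map (fun z => z - 1)).map norm)) • r := by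
          apply Multiset.sum_le_card_nsmul
          intro x hx
          simp only [Multiset.map_map, Multiset.mem_map, Function.comp] at hx
          obtain ⟨z, hz, rfl⟩ := hx
          have hz' := Multiset.mem_filter.1 hz
          exact (hsplit z hz'.1).1 hz'.2
      _ = (Multiset.card B : ℝ) * r := by simp [nsmul_eq_mul]
  have hSsum : ‖S.sum‖ ≤ (Multiset.card S : ℝ) * r := by
    calc ‖S.sum‖ ≤ (S.map norm).sum := norm_multiset_sum_le _
      _ ≤ (Multiset.card (S.map norm)) • r := by
          apply Multiset.sum_le_card_nsmul
          intro x hx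
          obtain ⟨z, hz, rfl⟩ := Multiset.mem_map.1 hx
          exact (Multiset.mem_filter.1 hz).2
      _ = (Multiset.card S : ℝ) * r := by simp [nsmul_eq_mul]
  have hcards : Multiset.card B + Multiset.card S = N := by
    rw [← hcardR, ← hRBS, Multiset.card_add]
  have hmain : ‖(Multiset.card B : ℂ) - (nn : ℂ)‖ < 1 := by
    have e2 : (Multiset.card B : ℂ) - (nn : ℂ) =
        ((Multiset.card B : ℂ) - B.sum) + (-(S.sum)) + (R.sum - (nn : ℂ)) := by
      rw [← hRBS, Multiset.sum_add]; ring
    rw [e2]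
    have h3 : ‖(Multiset.card B : ℂ) - B.sum‖ ≤ (Multiset.card B : ℝ) * r := by
      rw [norm_sub_rev]; exact hBsum
    have h4 : ‖R.sum - (nn : ℂ)‖ ≤ r := by rw [hsum]; exact htrace
    calc ‖((Multiset.card B : ℂ) - B.sum) + (-(S.sum)) + (R.sum - (nn : ℂ))‖
        ≤ ‖((Multiset.card B : ℂ) - B.sum) + (-(S.sum))‖ + ‖R.sum - (nn : ℂ)‖ :=
          norm_add_le _ _
      _ ≤ ‖(Multiset.card B : ℂ) - B.sum‖ + ‖S.sum‖ + ‖R.sum - (nn : ℂ)‖ := by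
          gcongr; exact (norm_add_le _ _).trans (by rw [norm_neg])
      _ ≤ (Multiset.card B : ℝ) * r + (Multiset.card S : ℝ) * r + r := by gcongr
      _ = ((Multiset.card B + Multiset.card S : ℕ) : ℝ) * r + r := by push_cast; ring
      _ = (N : ℝ) * r + r := by rw [hcards]
      _ < 1 := hcount
  have habs : |(Multiset.card B : ℝ) - (nn : ℝ)| < 1 := by
    have : ((Multiset.card B : ℂ) - (nn : ℂ)) = (((Multiset.card B : ℝ) - (nn : ℝ) : ℝ) : ℂ) := by
      push_cast; ring
    rw [this, Complex.norm_real] at hmain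
    exact hmain
  have hBn : Multiset.card B = nn := by
    rw [abs_lt] at habs
    have h5 : (Multiset.card B : ℝ) < nn + 1 := by linarith
    have h6 : (nn : ℝ) < Multiset.card B + 1 := by linarith
    have h5' : Multiset.card B < nn + 1 := by exact_mod_cast h5
    have h6' : nn < Multiset.card B + 1 := by exact_mod_cast h6
    omega
  exact ⟨hBn, by omega⟩

/-- There exists `δ₀ = δ₀(n,d) > 0` such that for any `δ ≤ δ₀` and any linear
operator `L` on `ℝ^(n+d)` with `‖π_V − L‖ ≤ δ` (operator norm), where `π_V` is the orthogonal
projection onto an `n`-dimensional subspace `V`, the complex eigenvalues of `L` counted with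
algebraic multiplicity split into exactly `n` with `|λ| ≥ 1 − (n+d)δ ≥ 3/4` and exactly `d`
with `|λ| ≤ (n+d)δ ≤ 1/4`. -/
theorem stmt0 (n d : ℕ) :
    ∃ δ₀ : ℝ, 0 < δ₀ ∧
      ∀ (V : Submodule ℝ (EuclideanSpace ℝ (Fin (n + d)))),
        Module.finrank ℝ V = n →
        ∀ δ : ℝ, 0 < δ → δ ≤ δ₀ →
          ∀ L : EuclideanSpace ℝ (Fin (n + d)) →L[ℝ] EuclideanSpace ℝ (Fin (n + d)),
            ‖(V.subtypeL.comp V.orthogonalProjection) - L‖ ≤ δ →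
              (3 / 4 : ℝ) ≤ 1 - (n + d : ℝ) * δ ∧ (n + d : ℝ) * δ ≤ 1 / 4 ∧
              (Multiset.card
                (((LinearMap.charpoly
                    (L : EuclideanSpace ℝ (Fin (n + d)) →ₗ[ℝ] EuclideanSpace ℝ (Fin (n + d)))).map
                    (algebraMap ℝ ℂ)).roots.filter
                  (fun z => 1 - (n + d : ℝ) * δ ≤ ‖z‖)) = n) ∧
              (Multiset.card
                (((LinearMap.charpoly
                    (L : EuclideanSpace ℝ (Fin (n + d)) →ₗ[ℝ] EuclideanSpace ℝ (Fin (n + d)))).map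
                    (algebraMap ℝ ℂ)).roots.filter
                  (fun z => ‖z‖ ≤ (n + d : ℝ) * δ)) = d) := by
  refine ⟨1 / (8 * (((n : ℝ) + d) ^ 2 + 1)), by positivity, ?_⟩
  intro V hV δ hδpos hδ0 L hL
  set E := EuclideanSpace ℝ (Fin (n + d))
  set c : ℝ := (n : ℝ) + d with hc
  have hc0 : 0 ≤ c := by positivity
  have hδle : δ * (8 * (c ^ 2 + 1)) ≤ 1 := by
    rw [← le_div_iff₀ (by positivity)] at *
    · exact le_trans hδ0 (le_of_eq (by rw [one_div]))
  -- basic inequalities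
  have hr4 : c * δ ≤ 1 / 4 := by nlinarith [sq_nonneg (2 * c - 1), mul_le_mul_of_nonneg_left hδle hc0]
  have hcount : c * (c * δ) + c * δ < 1 := by
    nlinarith [sq_nonneg c, mul_le_mul_of_nonneg_left hδle hc0,
      mul_le_mul_of_nonneg_left (mul_le_mul_of_nonneg_left hδle hc0) hc0]
  have hrpos : 0 ≤ c * δ := by positivity
  refine ⟨by linarith, hr4, ?_⟩
  -- construct an adapted orthonormal basis
  let b1 : OrthonormalBasis (Fin n) ℝ V := (stdOrthonormalBasis ℝ V).reindex (finCongr hV)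
  set v : Fin (n + d) → E := fun i => if h : (i : ℕ) < n then (b1 ⟨i, h⟩ : E) else 0 with hv
  have hcardE : Module.finrank ℝ E = Fintype.card (Fin (n + d)) := by
    simp [E, finrank_euclideanSpace]
  have horth : Orthonormal ℝ (Set.restrict {i : Fin (n + d) | (i : ℕ) < n} v) := by
    rw [orthonormal_iff_ite]
    rintro ⟨i, hi⟩ ⟨j, hj⟩
    have hi' : (i : ℕ) < n := hi
    have hj' : (j : ℕ) < n := hj
    simp only [Set.restrict, Set.domRestrict_apply, hv, dif_pos hi', dif_pos hj']
    rw [← Submodule.coe_inner, orthonormal_iff_ite.mp b1.orthonormal]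
    by_cases hij : i = j
    · subst hij; simp
    · rw [if_neg (by simpa [Fin.ext_iff] using hij), if_neg (by
        simpa [Subtype.ext_iff, Fin.ext_iff] using hij)]
  obtain ⟨b, hb⟩ := horth.exists_orthonormalBasis_extension_of_card_eq hcardE
  have hbv : ∀ (i : Fin (n + d)) (h : (i : ℕ) < n), b i = (b1 ⟨i, h⟩ : E) := by
    intro i h
    rw [hb i h]
    simp [hv, dif_pos h]
  set P := V.subtypeL.comp V.orthogonalProjection with hP
  have hPapply : ∀ x : E, P x = (V.orthogonalProjection x : E) := fun x => rfl
  have hPb : ∀ i : Fin (n + d), P (b i) = if (i : ℕ) < n then b i else 0 := by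
    intro i
    by_cases h : (i : ℕ) < n
    · rw [if_pos h, hPapply]
      exact Submodule.starProjection_eq_self_iff.2 (by rw [hbv i h]; exact (b1 ⟨i, h⟩).2)
    · rw [if_neg h, hPapply]
      have key : ∀ k : Fin n, (inner ℝ ((b1 k : E)) (b i) : ℝ) = 0 := by
        intro k
        have hlt : (k : ℕ) < n + d := lt_of_lt_of_le k.isLt (Nat.le_add_right n d)
        have hbk : (b1 k : E) = b ⟨(k : ℕ), hlt⟩ := by
          rw [hbv ⟨(k : ℕ), hlt⟩ k.isLt]
        rw [hbk, orthonormal_iff_ite.mp b.orthonormal]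
        rw [if_neg]
        intro hctr
        apply h
        rw [← hctr]
        exact k.isLt
      rw [b1.orthogonalProjectionOnto_apply_eq_sum]
      push_cast
      simp only [key, zero_smul, Submodule.coe_smul]
      simp
  -- matrix of L
  set L' := (L : E →ₗ[ℝ] E) with hL'
  set M := LinearMap.toMatrix b.toBasis b.toBasis L' with hM
  have hMentry : ∀ i j, M i j = (inner ℝ (b i) (L (b j)) : ℝ) := by
    intro i j
    rw [hM, LinearMap.toMatrix_apply, OrthonormalBasis.coe_toBasis_repr_apply,
      OrthonormalBasis.repr_apply_apply, OrthonormalBasis.coe_toBasis]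
    rfl
  have hMD : ∀ i j, |M i j - (if i = j ∧ (j : ℕ) < n then 1 else 0)| ≤ δ := by
    intro i j
    have hD : (inner ℝ (b i) (P (b j)) : ℝ) = (if i = j ∧ (j : ℕ) < n then 1 else 0) := by
      rw [hPb j]
      by_cases h : (j : ℕ) < n
      · rw [if_pos h, orthonormal_iff_ite.mp b.orthonormal]
        by_cases hij : i = j
        · rw [if_pos hij, if_pos ⟨hij, h⟩]
        · rw [if_neg hij, if_neg (by tauto)]
      · rw [if_neg h, if_neg (by tauto), inner_zero_right]
    have e : M i j - (if i = j ∧ (j : ℕ) < n then 1 else 0) = -(inner ℝ (b i) ((P - L) (b j)) : ℝ) := by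
      rw [hMentry, ← hD, ContinuousLinearMap.sub_apply, inner_sub_right]
      ring
    rw [e, abs_neg]
    calc |(inner ℝ (b i) ((P - L) (b j)) : ℝ)| ≤ ‖b i‖ * ‖(P - L) (b j)‖ := abs_real_inner_le_norm _ _
      _ ≤ ‖b i‖ * (‖P - L‖ * ‖b j‖) := by
          gcongr
          exact (P - L).le_opNorm _
      _ ≤ 1 * (δ * 1) := by
          rw [b.orthonormal.1 i, b.orthonormal.1 j]
          simp only [one_mul, mul_one]
          exact hL
      _ = δ := by ring
  set A := M.map (algebraMap ℝ ℂ) with hA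
  have hchar : (LinearMap.charpoly L').map (algebraMap ℝ ℂ) = A.charpoly := by
    rw [← LinearMap.charpoly_toMatrix L' b.toBasis, ← hM, hA, Matrix.charpoly_map]
  -- Gershgorin bound on the roots
  have hroots : ∀ μ ∈ A.charpoly.roots, ‖μ‖ ≤ c * δ ∨ ‖μ - 1‖ ≤ c * δ := by
    intro μ hμ
    obtain ⟨k, hk⟩ := eigenvalue_mem_ball (hasEigenvalue_of_root' A hμ)
    rw [Metric.mem_closedBall, Complex.dist_eq] at hk
    have hpos : 0 < n + d := k.pos
    have hsum : ∑ j ∈ Finset.univ.erase k, ‖A k j‖ ≤ ((n + d : ℕ) - 1 : ℕ) * δ := by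
      calc ∑ j ∈ Finset.univ.erase k, ‖A k j‖
          ≤ (Finset.univ.erase k).card • δ := by
            apply Finset.sum_le_card_nsmul
            intro j hj
            have hjk : j ≠ k := (Finset.mem_erase.1 hj).1
            have := hMD k j
            rw [if_neg (by tauto)] at this
            rw [hA, Matrix.map_apply]
            simpa using this
        _ = ((n + d : ℕ) - 1 : ℕ) * δ := by
            rw [Finset.card_erase_of_mem (Finset.mem_univ k)]
            simp [nsmul_eq_mul]
    have hdiag : ‖A k k - (if (k : ℕ) < n then (1 : ℂ) else 0)‖ ≤ δ := by
      rw [hA, Matrix.map_apply]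
      by_cases h : (k : ℕ) < n
      · rw [if_pos h]
        have h2 := hMD k k
        rw [if_pos ⟨rfl, h⟩] at h2
        rw [show ((algebraMap ℝ ℂ) (M k k) - 1 : ℂ) = ((M k k - 1 : ℝ) : ℂ) by rw [Complex.coe_algebraMap]; push_cast; ring,
          Complex.norm_real]
        exact h2
      · rw [if_neg h, sub_zero]
        have h2 := hMD k k
        rw [if_neg (by tauto), sub_zero] at h2
        rw [show ((algebraMap ℝ ℂ) (M k k) : ℂ) = ((M k k : ℝ) : ℂ) from rfl, Complex.norm_real]
        exact h2
    have htotal : ‖μ - (if (k : ℕ) < n then (1 : ℂ) else 0)‖ ≤ c * δ := by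
      calc ‖μ - (if (k : ℕ) < n then (1 : ℂ) else 0)‖
          ≤ ‖μ - A k k‖ + ‖A k k - (if (k : ℕ) < n then (1 : ℂ) else 0)‖ := by
            have := norm_add_le (μ - A k k) (A k k - (if (k : ℕ) < n then (1 : ℂ) else 0))
            simpa using this
        _ ≤ ((n + d : ℕ) - 1 : ℕ) * δ + δ := by gcongr; exact hk.trans hsum
        _ = c * δ := by
            rw [Nat.cast_sub (by omega)]
            push_cast [hc]
            ring
    by_cases h : (k : ℕ) < n
    · right; rwa [if_pos h] at htotal
    · left; rwa [if_neg h, sub_zero] at htotal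
  -- trace bound
  have htrace : ‖A.trace - (n : ℂ)‖ ≤ c * δ := by
    have hAtr : A.trace = ((M.trace : ℝ) : ℂ) := by
      rw [hA, Matrix.trace, Matrix.trace]
      push_cast
      simp [Matrix.diag_apply, Matrix.map_apply]
    have hDsum : ∑ i : Fin (n + d), (if (i : ℕ) < n then (1 : ℝ) else 0) = n := by
      rw [Fin.sum_univ_add]
      simp
    have hMtr : |M.trace - (n : ℝ)| ≤ c * δ := by
      rw [Matrix.trace, ← hDsum]
      rw [show ∑ i, (M.diag i) - ∑ i : Fin (n + d), (if (i : ℕ) < n then (1 : ℝ) else 0)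
          = ∑ i : Fin (n + d), (M i i - (if (i : ℕ) < n then (1 : ℝ) else 0)) by
        rw [Finset.sum_sub_distrib]; rfl]
      calc |∑ i : Fin (n + d), (M i i - (if (i : ℕ) < n then (1 : ℝ) else 0))|
          ≤ ∑ i : Fin (n + d), |M i i - (if (i : ℕ) < n then (1 : ℝ) else 0)| :=
            Finset.abs_sum_le_sum_abs _ _
        _ ≤ Finset.univ.card • δ := by
            apply Finset.sum_le_card_nsmul
            intro i _
            have := hMD i i
            by_cases h : (i : ℕ) < n
            · rw [if_pos h]; rwa [if_pos ⟨rfl, h⟩] at this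
            · rw [if_neg h]; rwa [if_neg (by tauto)] at this
        _ = c * δ := by simp [nsmul_eq_mul, hc]
    rw [hAtr, show (((M.trace : ℝ) : ℂ) - (n : ℂ)) = ((M.trace - (n : ℝ) : ℝ) : ℂ) by push_cast; ring,
      Complex.norm_real]
    exact hMtr
  have hcount' : ((n + d : ℕ) : ℝ) * (c * δ) + c * δ < 1 := by
    push_cast
    rw [← hc]
    exact hcount
  obtain ⟨h1, h2⟩ := count_key' (nn := n) A hrpos hr4 hroots htrace hcount'
  rw [hchar]
  exact ⟨h1, by omega⟩
end

section
/- Fix R > 0 and let u₁,…,uₙ be n vectors in R^(n+d). Suppose there exist constants 0 < k₀ < K₀ such that |uⱼ| ≤ K₀R for all j, |u₁| ≥ k₀R, and for each j ∈ {2,…,n}, the distance from uⱼ to span{u₁,…,u_{j−1}} is at least k₀R. Then u₁,…,uₙ are linearly independent, and every vector v ∈ span{u₁,…,uₙ} can be written uniquely as v = Σⱼ βⱼuⱼ with |βⱼ| ≤ K₁ |v| / R for all j, where K₁ depends only on n, k₀, and K₀. -/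
open Metric Pointwise

private lemma aux_infDist_add {E : Type*} [NormedAddCommGroup E] [Module ℝ E]
    (W : Submodule ℝ E) (x p : E) (hp : p ∈ W) :
    Metric.infDist (x + p) (W : Set E) = Metric.infDist x (W : Set E) := by
  have himg : (fun y => y + p) '' (W : Set E) = (W : Set E) := by
    ext y
    constructor
    · rintro ⟨z, hz, rfl⟩; exact W.add_mem hz hp
    · intro hy; exact ⟨y - p, W.sub_mem hy hp, sub_add_cancel y p⟩
  calc Metric.infDist (x + p) (W : Set E)
      = Metric.infDist ((fun y => y + p) x) ((fun y => y + p) '' (W : Set E)) := by rw [himg]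
    _ = Metric.infDist x (W : Set E) :=
        Metric.infDist_image (IsometryEquiv.addRight p).isometry

private lemma aux_infDist_smul {E : Type*} [NormedAddCommGroup E] [NormedSpace ℝ E]
    (W : Submodule ℝ E) (x : E) {c : ℝ} (hc : c ≠ 0) :
    Metric.infDist (c • x) (W : Set E) = |c| * Metric.infDist x (W : Set E) := by
  have himg : c • (W : Set E) = (W : Set E) := by
    ext y
    constructor
    · rintro ⟨z, hz, rfl⟩; exact W.smul_mem c hz
    · intro hy
      exact ⟨c⁻¹ • y, W.smul_mem _ hy, by simp [smul_smul, mul_inv_cancel₀ hc]⟩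
  rw [← Real.norm_eq_abs, ← infDist_smul₀ hc (W : Set E) x, himg]

/-- Quantitatively linearly independent vectors give bounded coefficients.
`K₁` depends only on `n`, `k₀`, `K₀`. -/
theorem stmt2 (n : ℕ) (hn : 1 ≤ n) (k₀ K₀ : ℝ) (hk : 0 < k₀) (hkK : k₀ < K₀) :
    ∃ K₁ : ℝ, 0 < K₁ ∧
      ∀ (d : ℕ) (R : ℝ), 0 < R →
        ∀ u : Fin n → EuclideanSpace ℝ (Fin (n + d)),
          (∀ j, ‖u j‖ ≤ K₀ * R) →
          k₀ * R ≤ ‖u ⟨0, by omega⟩‖ →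
          (∀ j : Fin n, 1 ≤ (j : ℕ) →
            k₀ * R ≤ Metric.infDist (u j)
              (Submodule.span ℝ (u '' {i : Fin n | (i : ℕ) < (j : ℕ)}) :
                Set (EuclideanSpace ℝ (Fin (n + d))))) →
          LinearIndependent ℝ u ∧
            ∀ v ∈ Submodule.span ℝ (Set.range u),
              ∃! β : Fin n → ℝ,
                v = ∑ j, β j • u j ∧ ∀ j, |β j| ≤ K₁ * ‖v‖ / R := by
  obtain ⟨C, hCdef⟩ : ∃ C : ℝ, C = 1 + K₀ / k₀ := ⟨_, rfl⟩
  have hK₀ : 0 < K₀ := hk.trans hkK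
  have hC0 : 0 < C := by rw [hCdef]; positivity
  have hC1 : 1 ≤ C := by
    have h : 0 ≤ K₀ / k₀ := by positivity
    rw [hCdef]; linarith
  refine ⟨C ^ (n - 1) / k₀, by positivity, ?_⟩
  intro d R hR u hK hu0 hdist
  -- uniform distance hypothesis, including j = 0
  have hdist' : ∀ j : Fin n, k₀ * R ≤ Metric.infDist (u j)
      (Submodule.span ℝ (u '' {i : Fin n | (i : ℕ) < (j : ℕ)}) : Set (EuclideanSpace ℝ (Fin (n + d)))) := by
    intro j
    rcases Nat.eq_zero_or_pos j.val with h0 | h1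
    · have hj : j = ⟨0, by omega⟩ := Fin.ext h0
      have hset : {i : Fin n | (i : ℕ) < (j : ℕ)} = (∅ : Set (Fin n)) := by
        ext i; simp [h0]
      rw [hset]
      simp only [Set.image_empty, Submodule.span_empty, Submodule.bot_coe,
        Metric.infDist_singleton, dist_zero_right]
      rw [hj]; exact hu0
    · exact hdist j h1
  -- the key coefficient bound
  have key : ∀ β : Fin n → ℝ, ∀ j : Fin n,
      |β j| ≤ C ^ (n - 1) / k₀ * ‖∑ i, β i • u i‖ / R := by
    intro β
    set w : ℕ → EuclideanSpace ℝ (Fin (n + d)) := fun m => ∑ i ∈ Finset.univ.filter (fun i : Fin n => (i : ℕ) < m),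
      β i • u i with hwdef
    have hwn : w n = ∑ i, β i • u i := by
      apply Finset.sum_congr _ (fun _ _ => rfl)
      ext i; simp [i.isLt]
    have hstep : ∀ m (hm : m < n),
        w (m + 1) = β ⟨m, hm⟩ • u ⟨m, hm⟩ + w m := by
      intro m hm
      have hins : Finset.univ.filter (fun i : Fin n => (i : ℕ) < m + 1)
          = insert (⟨m, hm⟩ : Fin n) (Finset.univ.filter (fun i : Fin n => (i : ℕ) < m)) := by
        ext i
        simp only [Finset.mem_filter, Finset.mem_univ, true_and, Finset.mem_insert]
        constructor
        · intro h
          rcases Nat.lt_succ_iff_lt_or_eq.mp h with h' | h'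
          · exact Or.inr h'
          · exact Or.inl (Fin.ext h')
        · rintro (rfl | h)
          · simp
          · omega
      have hnotmem : (⟨m, hm⟩ : Fin n) ∉
          Finset.univ.filter (fun i : Fin n => (i : ℕ) < m) := by simp
      rw [hwdef]
      simp only [hins, Finset.sum_insert hnotmem]
    have hmem : ∀ m, w m ∈ Submodule.span ℝ (u '' {i : Fin n | (i : ℕ) < m}) := by
      intro m
      apply Submodule.sum_mem
      intro i hi
      simp only [Finset.mem_filter] at hi
      exact Submodule.smul_mem _ _ (Submodule.subset_span ⟨i, hi.2, rfl⟩)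
    -- coefficient extraction
    have hcoef : ∀ m (hm : m < n), |β ⟨m, hm⟩| * (k₀ * R) ≤ ‖w (m + 1)‖ := by
      intro m hm
      set jm : Fin n := ⟨m, hm⟩
      rcases eq_or_ne (β jm) 0 with h0 | h0
      · rw [h0]; simpa using norm_nonneg (w (m + 1))
      · set W := Submodule.span ℝ (u '' {i : Fin n | (i : ℕ) < (jm : ℕ)}) with hW
        have h1 : Metric.infDist (w (m + 1)) (W : Set (EuclideanSpace ℝ (Fin (n + d)))) ≤ ‖w (m + 1)‖ := by
          have := Metric.infDist_le_dist_of_mem (x := w (m + 1)) (W.zero_mem)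
          rwa [dist_zero_right] at this
        have h2 : Metric.infDist (w (m + 1)) (W : Set (EuclideanSpace ℝ (Fin (n + d))))
            = |β jm| * Metric.infDist (u jm) (W : Set (EuclideanSpace ℝ (Fin (n + d)))) := by
          rw [hstep m hm, aux_infDist_add W _ _ (hmem m), aux_infDist_smul W _ h0]
        have h3 := hdist' jm
        calc |β jm| * (k₀ * R) ≤ |β jm| * Metric.infDist (u jm) (W : Set (EuclideanSpace ℝ (Fin (n + d)))) := by
              exact mul_le_mul_of_nonneg_left h3 (abs_nonneg _)
          _ = Metric.infDist (w (m + 1)) (W : Set (EuclideanSpace ℝ (Fin (n + d)))) := h2.symm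
          _ ≤ ‖w (m + 1)‖ := h1
    -- norm chain step
    have hchainstep : ∀ m (hm : m < n), ‖w m‖ ≤ C * ‖w (m + 1)‖ := by
      intro m hm
      set jm : Fin n := ⟨m, hm⟩
      have h1 : ‖w m‖ ≤ ‖w (m + 1)‖ + |β jm| * ‖u jm‖ := by
        have : w m = w (m + 1) - β jm • u jm := by rw [hstep m hm]; abel
        rw [this]
        calc ‖w (m + 1) - β jm • u jm‖ ≤ ‖w (m + 1)‖ + ‖β jm • u jm‖ := norm_sub_le _ _
          _ = ‖w (m + 1)‖ + |β jm| * ‖u jm‖ := by rw [norm_smul, Real.norm_eq_abs]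
      have h2 := hcoef m hm
      have h3 := hK jm
      have h4 : |β jm| * ‖u jm‖ ≤ ‖w (m + 1)‖ * (K₀ / k₀) := by
        have hb : 0 ≤ |β jm| := abs_nonneg _
        have : |β jm| * ‖u jm‖ ≤ |β jm| * (K₀ * R) :=
          mul_le_mul_of_nonneg_left h3 hb
        have h5 : |β jm| * (K₀ * R) = (|β jm| * (k₀ * R)) * (K₀ / k₀) := by
          field_simp
        rw [h5] at this
        refine this.trans ?_
        apply mul_le_mul_of_nonneg_right h2
        positivity
      calc ‖w m‖ ≤ ‖w (m + 1)‖ + ‖w (m + 1)‖ * (K₀ / k₀) := by linarith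
        _ = C * ‖w (m + 1)‖ := by rw [hCdef]; ring
    -- full chain
    have hchain : ∀ t m, m + t = n → ‖w m‖ ≤ C ^ t * ‖w n‖ := by
      intro t
      induction t with
      | zero => intro m hm; simp [show m = n by omega]
      | succ t ih =>
        intro m hm
        have hmn : m < n := by omega
        have h1 := hchainstep m hmn
        have h2 := ih (m + 1) (by omega)
        calc ‖w m‖ ≤ C * ‖w (m + 1)‖ := h1
          _ ≤ C * (C ^ t * ‖w n‖) := mul_le_mul_of_nonneg_left h2 hC0.le
          _ = C ^ (t + 1) * ‖w n‖ := by ring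
    intro j
    have hj : (j : ℕ) < n := j.isLt
    have h1 : |β j| * (k₀ * R) ≤ ‖w ((j : ℕ) + 1)‖ := by
      have := hcoef (j : ℕ) hj
      simpa using this
    have h2 : ‖w ((j : ℕ) + 1)‖ ≤ C ^ (n - ((j : ℕ) + 1)) * ‖w n‖ :=
      hchain (n - ((j : ℕ) + 1)) ((j : ℕ) + 1) (by omega)
    have h3 : C ^ (n - ((j : ℕ) + 1)) ≤ C ^ (n - 1) :=
      pow_le_pow_right₀ hC1 (by omega)
    have h4 : C ^ (n - ((j : ℕ) + 1)) * ‖w n‖ ≤ C ^ (n - 1) * ‖w n‖ :=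
      mul_le_mul_of_nonneg_right h3 (norm_nonneg _)
    have h5 : |β j| * (k₀ * R) ≤ C ^ (n - 1) * ‖∑ i, β i • u i‖ := by
      rw [← hwn]; linarith
    rw [div_mul_eq_mul_div, div_div, le_div_iff₀ (by positivity)]
    exact h5
  -- linear independence
  have hLI : LinearIndependent ℝ u := by
    rw [Fintype.linearIndependent_iff]
    intro g hg i
    have := key g i
    rw [hg] at this
    simp only [norm_zero, mul_zero, zero_div] at this
    exact abs_nonpos_iff.mp this
  refine ⟨hLI, ?_⟩
  intro v hv
  obtain ⟨c, hc⟩ := (Submodule.mem_span_range_iff_exists_fun ℝ).mp hv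
  refine ⟨c, ⟨hc.symm, ?_⟩, ?_⟩
  · intro j
    have := key c j
    rw [hc] at this
    exact this
  · rintro β' ⟨hβ'v, -⟩
    funext j
    have hzero : ∑ i, (β' i - c i) • u i = 0 := by
      simp only [sub_smul, Finset.sum_sub_distrib]
      rw [← hβ'v, hc]
      abel
    have := Fintype.linearIndependent_iff.mp hLI (fun i => β' i - c i) hzero j
    linarith [this]
end

section
/- Let P₁ and P₂ be affine n-planes in R^(n+d), let x ∈ R^(n+d), R > 0, and suppose q₀, q₁, …, qₙ ∈ P₁ ∩ B_R(x) are points with: q₁ − q₀ ∉ B_{5r}(0), and for j ∈ {2,…,n}, qⱼ − q₀ has distance at least 5r from span{q₁−q₀,…,q_{j−1}−q₀}, for some 0 < r ≤ R. Suppose moreover d(qₗ, P₂) ≤ η for all ℓ ∈ {0,…,n}. Then for every y ∈ P₁ ∩ B_R(x), d(y, P₂) ≤ C(n, r/R) · η, where C depends only on n and the ratio r/R (in particular the two planes are quantitatively close on B_R(x)). -/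
open Metric Finset

/-- Scaling lower bound for infDist to a submodule. -/
lemma aux_abs_smul_infDist_le {E : Type*} [NormedAddCommGroup E] [NormedSpace ℝ E]
    (S : Submodule ℝ E) (c : ℝ) (x : E) :
    |c| * Metric.infDist x (S : Set E) ≤ Metric.infDist (c • x) (S : Set E) := by
  rcases eq_or_ne c 0 with rfl | hc
  · simpa using Metric.infDist_nonneg
  · by_contra h
    push_neg at h
    have hne : (S : Set E).Nonempty := ⟨0, S.zero_mem⟩
    obtain ⟨s, hs, hds⟩ := (Metric.infDist_lt_iff hne).mp h
    have h1 : Metric.infDist x (S : Set E) ≤ dist x (c⁻¹ • s) :=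
      Metric.infDist_le_dist_of_mem (S.smul_mem _ hs)
    have h2 : dist (c • x) s = |c| * dist x (c⁻¹ • s) := by
      rw [dist_eq_norm, dist_eq_norm, ← Real.norm_eq_abs, ← norm_smul,
        smul_sub, smul_inv_smul₀ hc]
    nlinarith [abs_pos.mpr hc, dist_nonneg (x := x) (y := c⁻¹ • s)]

/-- Quantitative coefficient bound for vectors in general position. -/
lemma aux_coeff_bound {E : Type*} [NormedAddCommGroup E] [NormedSpace ℝ E] {n : ℕ}
    (v : Fin n → E) {r R : ℝ} (hr : 0 < r) (hR : 0 ≤ R)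
    (hnorm : ∀ i, ‖v i‖ ≤ 2 * R)
    (hsep : ∀ j : Fin n, 5 * r ≤
      Metric.infDist (v j) ((Submodule.span ℝ (v '' {i | i < j}) : Submodule ℝ E) : Set E))
    (β : Fin n → ℝ) (j : Fin n) :
    |β j| ≤ (1 + 2 * R / (5 * r)) ^ n * ‖∑ i, β i • v i‖ / (5 * r) := by
  set A : ℝ := 2 * R / (5 * r) with hA
  have hA0 : 0 ≤ A := by positivity
  set T : ℕ → E := fun k => ∑ i ∈ Finset.univ.filter (fun i : Fin n => (i : ℕ) < k), β i • v i
    with hT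
  have hTn : T n = ∑ i, β i • v i := by
    apply Finset.sum_congr _ (fun _ _ => rfl)
    apply Finset.filter_true_of_mem
    exact fun i _ => i.isLt
  -- membership of partial sums in the span
  have key1 : ∀ (k : ℕ) (hk : k < n),
      T k ∈ Submodule.span ℝ (v '' {i | i < (⟨k, hk⟩ : Fin n)}) := by
    intro k hk
    apply Submodule.sum_mem
    intro i hi
    simp only [Finset.mem_filter] at hi
    exact Submodule.smul_mem _ _ (Submodule.subset_span ⟨i, by
      simp only [Set.mem_setOf_eq, Fin.lt_def]; exact hi.2, rfl⟩)
  -- step inequalities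
  have keyT : ∀ (k : ℕ) (hk : k < n), T (k + 1) = T k + β ⟨k, hk⟩ • v ⟨k, hk⟩ := by
    intro k hk
    have hins : Finset.univ.filter (fun i : Fin n => (i : ℕ) < k + 1) =
        insert (⟨k, hk⟩ : Fin n) (Finset.univ.filter (fun i : Fin n => (i : ℕ) < k)) := by
      ext i
      simp only [Finset.mem_filter, Finset.mem_insert, Finset.mem_univ, true_and, Fin.ext_iff]
      omega
    rw [hT]
    simp only [hins]
    rw [Finset.sum_insert (by simp)]
    exact add_comm _ _
  have key2 : ∀ (k : ℕ) (hk : k < n), |β ⟨k, hk⟩| * (5 * r) ≤ ‖T (k + 1)‖ := by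
    intro k hk
    have hmem := key1 k hk
    calc |β ⟨k, hk⟩| * (5 * r)
        ≤ |β ⟨k, hk⟩| * Metric.infDist (v ⟨k, hk⟩)
            ((Submodule.span ℝ (v '' {i | i < (⟨k, hk⟩ : Fin n)})) : Set E) :=
          mul_le_mul_of_nonneg_left (hsep _) (abs_nonneg _)
      _ ≤ Metric.infDist (β ⟨k, hk⟩ • v ⟨k, hk⟩)
            ((Submodule.span ℝ (v '' {i | i < (⟨k, hk⟩ : Fin n)})) : Set E) :=
          aux_abs_smul_infDist_le _ _ _
      _ ≤ dist (β ⟨k, hk⟩ • v ⟨k, hk⟩) (-(T k)) :=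
          Metric.infDist_le_dist_of_mem (Submodule.neg_mem _ hmem)
      _ = ‖T (k + 1)‖ := by
          rw [dist_eq_norm, sub_neg_eq_add, keyT k hk, add_comm]
  have key3 : ∀ (k : ℕ) (hk : k < n), ‖T k‖ ≤ (1 + A) * ‖T (k + 1)‖ := by
    intro k hk
    have h2 := key2 k hk
    have hb : |β ⟨k, hk⟩| ≤ ‖T (k + 1)‖ / (5 * r) := by
      rw [le_div_iff₀ (by positivity)]; exact h2
    have hTk : ‖T k‖ ≤ ‖T (k + 1)‖ + |β ⟨k, hk⟩| * ‖v ⟨k, hk⟩‖ := by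
      have : T k = T (k + 1) - β ⟨k, hk⟩ • v ⟨k, hk⟩ := by rw [keyT k hk]; abel
      rw [this]
      calc ‖T (k + 1) - β ⟨k, hk⟩ • v ⟨k, hk⟩‖
          ≤ ‖T (k + 1)‖ + ‖β ⟨k, hk⟩ • v ⟨k, hk⟩‖ := norm_sub_le _ _
        _ = ‖T (k + 1)‖ + |β ⟨k, hk⟩| * ‖v ⟨k, hk⟩‖ := by rw [norm_smul, Real.norm_eq_abs]
    have hv := hnorm ⟨k, hk⟩
    have habs : (0:ℝ) ≤ |β ⟨k, hk⟩| := abs_nonneg _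
    have : |β ⟨k, hk⟩| * ‖v ⟨k, hk⟩‖ ≤ (‖T (k + 1)‖ / (5 * r)) * (2 * R) := by
      apply mul_le_mul hb hv (norm_nonneg _) (by positivity)
    have hAe : (‖T (k + 1)‖ / (5 * r)) * (2 * R) = A * ‖T (k + 1)‖ := by
      rw [hA]; field_simp
    nlinarith
  -- downward induction
  have claim : ∀ m : ℕ, ‖T (n - m)‖ ≤ (1 + A) ^ m * ‖T n‖ := by
    intro m
    induction m with
    | zero => simp
    | succ m ih =>
      by_cases hnm : n ≤ m
      · have : n - (m + 1) = 0 := by omega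
        rw [this]
        have : T 0 = 0 := by
          rw [hT]; simp
        rw [this, norm_zero]
        positivity
      · push_neg at hnm
        have hk : n - (m + 1) < n := by omega
        have hkk : n - (m + 1) + 1 = n - m := by omega
        calc ‖T (n - (m + 1))‖ ≤ (1 + A) * ‖T (n - (m + 1) + 1)‖ := key3 _ hk
          _ = (1 + A) * ‖T (n - m)‖ := by rw [hkk]
          _ ≤ (1 + A) * ((1 + A) ^ m * ‖T n‖) :=
              mul_le_mul_of_nonneg_left ih (by positivity)
          _ = (1 + A) ^ (m + 1) * ‖T n‖ := by ring
  -- conclude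
  have hjk := key2 (j : ℕ) j.isLt
  have hje : (⟨(j : ℕ), j.isLt⟩ : Fin n) = j := by ext; rfl
  rw [hje] at hjk
  have h1 : ‖T ((j : ℕ) + 1)‖ ≤ (1 + A) ^ (n - ((j : ℕ) + 1)) * ‖T n‖ := by
    have : n - (n - ((j : ℕ) + 1)) = (j : ℕ) + 1 := by omega
    calc ‖T ((j : ℕ) + 1)‖ = ‖T (n - (n - ((j : ℕ) + 1)))‖ := by rw [this]
      _ ≤ (1 + A) ^ (n - ((j : ℕ) + 1)) * ‖T n‖ := claim _
  have h2 : (1 + A) ^ (n - ((j : ℕ) + 1)) * ‖T n‖ ≤ (1 + A) ^ n * ‖T n‖ := by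
    apply mul_le_mul_of_nonneg_right _ (norm_nonneg _)
    exact pow_le_pow_right₀ (by linarith) (by omega)
  rw [le_div_iff₀ (by positivity : (0:ℝ) < 5 * r)]
  rw [← hTn]
  linarith

/-- If affine `n`-planes `P₁, P₂` in `ℝ^(n+d)` are such that `P₁ ∩ B_R(x)`
contains points `q₀, …, qₙ` that are quantitatively in general position at scale `r`
(`‖q₁ − q₀‖ ≥ 5r` and each `qⱼ − q₀` is at distance ≥ `5r` from the span of its predecessors)
and each `qₗ` is `η`-close to `P₂`, then every `y ∈ P₁ ∩ B_R(x)` satisfies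
`d(y, P₂) ≤ C η`, where `C` depends only on `n` and the ratio `r/R`. -/
theorem stmt16 (n : ℕ) (hn : 1 ≤ n) (ρ : ℝ) (hρ : 0 < ρ) :
    ∃ C : ℝ, 0 < C ∧
      ∀ (d : ℕ) (x : EuclideanSpace ℝ (Fin (n + d))) (R r η : ℝ),
        0 < R → 0 < r → r ≤ R → r = ρ * R → 0 ≤ η →
        ∀ P₁ P₂ : AffineSubspace ℝ (EuclideanSpace ℝ (Fin (n + d))),
          (P₁ : Set (EuclideanSpace ℝ (Fin (n + d)))).Nonempty →
          (P₂ : Set (EuclideanSpace ℝ (Fin (n + d)))).Nonempty →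
          Module.finrank ℝ P₁.direction = n → Module.finrank ℝ P₂.direction = n →
          ∀ q : Fin (n + 1) → EuclideanSpace ℝ (Fin (n + d)),
            (∀ l, q l ∈ (P₁ : Set (EuclideanSpace ℝ (Fin (n + d)))) ∩ Metric.ball x R) →
            5 * r ≤ ‖q ⟨1, by omega⟩ - q 0‖ →
            (∀ j : Fin (n + 1), 2 ≤ (j : ℕ) →
              5 * r ≤ Metric.infDist (q j - q 0)
                (Submodule.span ℝ
                  {w | ∃ i : Fin (n + 1), 1 ≤ (i : ℕ) ∧ (i : ℕ) < (j : ℕ) ∧ w = q i - q 0} :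
                  Set (EuclideanSpace ℝ (Fin (n + d))))) →
            (∀ l, Metric.infDist (q l) (P₂ : Set (EuclideanSpace ℝ (Fin (n + d)))) ≤ η) →
            ∀ y ∈ (P₁ : Set (EuclideanSpace ℝ (Fin (n + d)))) ∩ Metric.ball x R,
              Metric.infDist y (P₂ : Set (EuclideanSpace ℝ (Fin (n + d)))) ≤ C * η := by
  set B : ℝ := (1 + 2 / (5 * ρ)) ^ n * (2 / (5 * ρ)) with hB
  have hB0 : 0 < B := by positivity
  refine ⟨1 + 2 * n * B, by positivity, ?_⟩
  intro d x R r η hR hr hrR hrρ hη P₁ P₂ hP₁ne hP₂ne hdim₁ hdim₂ q hq hq1 hqsep hqη y hy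
  set v : Fin n → EuclideanSpace ℝ (Fin (n + d)) := fun i => q i.succ - q 0 with hv
  -- norm bounds
  have hqd : ∀ l, dist (q l) x < R := fun l => Metric.mem_ball.mp (hq l).2
  have hnormv : ∀ i, ‖v i‖ ≤ 2 * R := by
    intro i
    have : ‖v i‖ = dist (q i.succ) (q 0) := by rw [dist_eq_norm]
    rw [this]
    calc dist (q i.succ) (q 0) ≤ dist (q i.succ) x + dist x (q 0) := dist_triangle _ _ _
      _ ≤ R + R := add_le_add (hqd _).le (by rw [dist_comm]; exact (hqd _).le)
      _ = 2 * R := by ring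
  -- separation
  have hsepv : ∀ j : Fin n, 5 * r ≤
      Metric.infDist (v j) ((Submodule.span ℝ (v '' {i | i < j}) : Submodule ℝ (EuclideanSpace ℝ (Fin (n + d)))) : Set (EuclideanSpace ℝ (Fin (n + d)))) := by
    intro j
    by_cases hj : (j : ℕ) = 0
    · have hj0 : j = ⟨0, by omega⟩ := by ext; exact hj
      have hempty : (v '' {i | i < j}) = ∅ := by
        rw [hj0]
        simp only [Set.image_eq_empty]
        ext i; simp [Fin.lt_def]
      rw [hempty, Submodule.span_empty]
      have : ((⊥ : Submodule ℝ (EuclideanSpace ℝ (Fin (n + d)))) : Set (EuclideanSpace ℝ (Fin (n + d)))) = {0} := by simp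
      rw [this, Metric.infDist_singleton, dist_zero_right]
      have : v j = q ⟨1, by omega⟩ - q 0 := by
        rw [hj0, hv]
        congr 1
      rw [this]
      exact hq1
    · have hj1 : 1 ≤ (j : ℕ) := by omega
      have hspec := hqsep j.succ (by simp [Fin.val_succ]; omega)
      have hset : {w | ∃ i : Fin (n + 1), 1 ≤ (i : ℕ) ∧ (i : ℕ) < (j.succ : ℕ) ∧ w = q i - q 0}
          = v '' {i : Fin n | i < j} := by
        ext w
        constructor
        · rintro ⟨i, h1, h2, rfl⟩
          simp only [Fin.val_succ] at h2
          have hlt : (i : ℕ) - 1 < n := by omega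
          have hsucc : (⟨(i : ℕ) - 1, hlt⟩ : Fin n).succ = i := by
            apply Fin.ext; simp only [Fin.val_succ]; omega
          refine ⟨⟨(i : ℕ) - 1, hlt⟩, by simp only [Set.mem_setOf_eq, Fin.lt_def]; omega, ?_⟩
          show q ((⟨(i : ℕ) - 1, hlt⟩ : Fin n).succ) - q 0 = q i - q 0
          rw [hsucc]
        · rintro ⟨k, hk, rfl⟩
          simp only [Set.mem_setOf_eq, Fin.lt_def] at hk
          exact ⟨k.succ, by simp [Fin.val_succ], by simp [Fin.val_succ]; omega, rfl⟩
      have hvj : v j = q j.succ - q 0 := rfl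
      rw [hvj, ← hset]
      exact hspec
  -- the v's span the direction of P₁
  have hvdir : ∀ i, v i ∈ P₁.direction := by
    intro i
    have := AffineSubspace.vsub_mem_direction (hq i.succ).1 (hq 0).1
    simpa using this
  have hle : Submodule.span ℝ (Set.range v) ≤ P₁.direction := by
    rw [Submodule.span_le]
    rintro _ ⟨i, rfl⟩
    exact hvdir i
  have hli : LinearIndependent ℝ v := by
    rw [Fintype.linearIndependent_iff]
    intro g hg i
    have := aux_coeff_bound v hr hR.le hnormv hsepv g i
    rw [hg, norm_zero] at this
    simp only [mul_zero, zero_div] at this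
    exact abs_nonpos_iff.mp this
  have hfr : Module.finrank ℝ (Submodule.span ℝ (Set.range v)) = n := by
    rw [finrank_span_eq_card hli, Fintype.card_fin]
  have hspan : Submodule.span ℝ (Set.range v) = P₁.direction :=
    Submodule.eq_of_le_of_finrank_le hle (by rw [hdim₁, hfr])
  -- write y - q 0 in terms of the v's
  have hz : y - q 0 ∈ Submodule.span ℝ (Set.range v) := by
    rw [hspan]
    have := AffineSubspace.vsub_mem_direction hy.1 (hq 0).1
    simpa using this
  obtain ⟨β, hβ⟩ := (Submodule.mem_span_range_iff_exists_fun ℝ).mp hz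
  -- bound coefficients
  have hzn : ‖y - q 0‖ ≤ 2 * R := by
    have : ‖y - q 0‖ = dist y (q 0) := by rw [dist_eq_norm]
    rw [this]
    calc dist y (q 0) ≤ dist y x + dist x (q 0) := dist_triangle _ _ _
      _ ≤ R + R := add_le_add (Metric.mem_ball.mp hy.2).le
          (by rw [dist_comm]; exact (hqd _).le)
      _ = 2 * R := by ring
  have hratio : 2 * R / (5 * r) = 2 / (5 * ρ) := by
    rw [hrρ]; field_simp
  have hβbound : ∀ j, |β j| ≤ B := by
    intro j
    have h1 := aux_coeff_bound v hr hR.le hnormv hsepv β j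
    rw [hβ] at h1
    calc |β j| ≤ (1 + 2 * R / (5 * r)) ^ n * ‖y - q 0‖ / (5 * r) := h1
      _ ≤ (1 + 2 * R / (5 * r)) ^ n * (2 * R) / (5 * r) := by
          apply div_le_div_of_nonneg_right _ (by positivity)
          · exact mul_le_mul_of_nonneg_left hzn (by positivity)
      _ = (1 + 2 * R / (5 * r)) ^ n * (2 * R / (5 * r)) := by ring
      _ = B := by rw [hratio, hB]
  -- pick closest points on P₂
  have hP₂cl : IsClosed (P₂ : Set (EuclideanSpace ℝ (Fin (n + d)))) := P₂.closed_of_finiteDimensional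
  have hclosest : ∀ l : Fin (n + 1), ∃ p ∈ (P₂ : Set (EuclideanSpace ℝ (Fin (n + d)))), dist (q l) p ≤ η := by
    intro l
    obtain ⟨p, hp, hpd⟩ := hP₂cl.exists_infDist_eq_dist hP₂ne (q l)
    exact ⟨p, hp, by rw [← hpd]; exact hqη l⟩
  choose p hp hpd using hclosest
  -- the comparison point on P₂
  set w : EuclideanSpace ℝ (Fin (n + d)) := p 0 + ∑ i, β i • (p i.succ - p 0) with hw
  have hwmem : w ∈ (P₂ : Set (EuclideanSpace ℝ (Fin (n + d)))) := by
    have hsum : (∑ i, β i • (p i.succ - p 0)) ∈ P₂.direction := by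
      apply Submodule.sum_mem
      intro i _
      apply Submodule.smul_mem
      have := AffineSubspace.vsub_mem_direction (hp i.succ) (hp 0)
      simpa using this
    have := AffineSubspace.vadd_mem_of_mem_direction hsum (hp 0)
    have heq : (∑ i, β i • (p i.succ - p 0)) +ᵥ p 0 = w := by
      rw [hw]
      simp [vadd_eq_add]
      abel
    rwa [heq] at this
  -- final estimate
  have hyw : y - w = (q 0 - p 0) + ∑ i, β i • ((q i.succ - p i.succ) - (q 0 - p 0)) := by
    have hy2 : y = q 0 + ∑ i, β i • v i := by
      rw [hβ]; abel
    have hsum : ∑ i : Fin n, β i • ((q i.succ - p i.succ) - (q 0 - p 0))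
        = (∑ i : Fin n, β i • v i) - ∑ i : Fin n, β i • (p i.succ - p 0) := by
      rw [← Finset.sum_sub_distrib]
      refine Finset.sum_congr rfl fun i _ => ?_
      rw [← smul_sub]
      congr 1
      show (q i.succ - p i.succ) - (q 0 - p 0) = (q i.succ - q 0) - (p i.succ - p 0)
      abel
    rw [hy2, hw, hsum]
    abel
  have hterm : ∀ i : Fin n, ‖β i • ((q i.succ - p i.succ) - (q 0 - p 0))‖ ≤ B * (2 * η) := by
    intro i
    rw [norm_smul, Real.norm_eq_abs]
    have h1 : ‖(q i.succ - p i.succ) - (q 0 - p 0)‖ ≤ 2 * η := by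
      calc ‖(q i.succ - p i.succ) - (q 0 - p 0)‖
          ≤ ‖q i.succ - p i.succ‖ + ‖q 0 - p 0‖ := norm_sub_le _ _
        _ ≤ η + η := add_le_add (by rw [← dist_eq_norm]; exact hpd _)
            (by rw [← dist_eq_norm]; exact hpd _)
        _ = 2 * η := by ring
    exact mul_le_mul (hβbound i) h1 (norm_nonneg _) hB0.le
  calc Metric.infDist y (P₂ : Set (EuclideanSpace ℝ (Fin (n + d)))) ≤ dist y w := Metric.infDist_le_dist_of_mem hwmem
    _ = ‖y - w‖ := dist_eq_norm _ _
    _ ≤ ‖q 0 - p 0‖ + ‖∑ i, β i • ((q i.succ - p i.succ) - (q 0 - p 0))‖ := by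
        rw [hyw]; exact norm_add_le _ _
    _ ≤ η + ∑ i : Fin n, B * (2 * η) := by
        apply add_le_add (by rw [← dist_eq_norm]; exact hpd _)
        calc ‖∑ i, β i • ((q i.succ - p i.succ) - (q 0 - p 0))‖
            ≤ ∑ i, ‖β i • ((q i.succ - p i.succ) - (q 0 - p 0))‖ := norm_sum_le _ _
          _ ≤ ∑ i : Fin n, B * (2 * η) := Finset.sum_le_sum (fun i _ => hterm i)
    _ = (1 + 2 * n * B) * η := by
        rw [Finset.sum_const, Finset.card_univ, Fintype.card_fin]
        simp [nsmul_eq_mul]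
        ring
end
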